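/- Total variation closeness of shifted binomials: if (d_n) is a sequence of natural numbers with d_n = o(√n), and c_n ≤ d_n, and n_n satisfies n − d_n ≤ n_n ≤ n, then d_TV( c_n + Bin(n_n, 1/2), Bin(n, 1/2) ) → 0 as n → ∞. -/

import Mathlib

open Filter

/-- The probability mass function of `Bin(m, 1/2)` on `ℤ`. -/
noncomputable def binProb (m : ℕ) (k : ℤ) : ℝ :=
  if 0 ≤ k ∧ k ≤ (m : ℤ) then (Nat.choose m k.toNat : ℝ) / 2 ^ m else 0

/-- The measure of a set `A ⊆ ℤ` under the mass function `f`. -/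
noncomputable def massOf (f : ℤ → ℝ) (A : Set ℤ) : ℝ := ∑' k : A, f ↑k

/-- Total variation distance between two mass functions on `ℤ`:
`sup_{A ⊆ ℤ} |μ(A) − ν(A)|`. -/
noncomputable def dTV (f g : ℤ → ℝ) : ℝ := ⨆ A : Set ℤ, |massOf f A - massOf g A|

/-!
`Bin(m + 1, 1/2)` is the average of `Bin(m, 1/2)` and its shift by one, and by unimodality of
the binomial mass function `p` the sum `∑ₖ |p(k - 1) - p(k)|` telescopes to twice the largest
point mass `M_m = C(m, ⌊m/2⌋) / 2^m`. So in `ℓ¹` a unit shift moves `Bin(m, 1/2)` by `2 M_m`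
and an extra trial by `M_m`, and passing from `cₙ + Bin(mₙ, 1/2)` through `Bin(mₙ, 1/2)` to
`Bin(n, 1/2)` costs at most `(2 cₙ + n - mₙ) M_{mₙ} ≤ 3 dₙ M_{mₙ}`. The central binomial
recursion gives `M_m² (m + 1) ≤ 2`, so this is `O(dₙ / √n)`.
-/

open Finset

lemma binProb_nonneg (m : ℕ) (k : ℤ) : 0 ≤ binProb m k := by
  unfold binProb
  split_ifs <;> positivity

lemma binProb_eq_zero_of_neg {m : ℕ} {k : ℤ} (hk : k < 0) : binProb m k = 0 :=
  if_neg (by omega)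

lemma binProb_eq_zero_of_lt {m : ℕ} {k : ℤ} (hk : (m : ℤ) < k) : binProb m k = 0 :=
  if_neg (by omega)

lemma binProb_natCast (m j : ℕ) : binProb m j = (m.choose j : ℝ) / 2 ^ m := by
  unfold binProb
  split_ifs with h
  · simp
  · rw [Nat.choose_eq_zero_of_lt (by omega)]
    simp

lemma binProb_succ (m : ℕ) (k : ℤ) :
    binProb (m + 1) k = (binProb m k + binProb m (k - 1)) / 2 := by
  rcases lt_or_ge k 0 with hk | hk
  · simp [binProb_eq_zero_of_neg, hk, show k - 1 < 0 by omega]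
  obtain ⟨j, rfl⟩ := Int.eq_ofNat_of_zero_le hk
  cases j with
  | zero =>
    rw [binProb_eq_zero_of_neg (show ((0 : ℕ) : ℤ) - 1 < 0 by omega)]
    simp [binProb, pow_succ, show (0 : ℤ) ≤ m + 1 by omega]
    ring
  | succ i =>
    rw [show ((i + 1 : ℕ) : ℤ) - 1 = i by push_cast; ring]
    simp only [binProb_natCast, Nat.choose_succ_succ, pow_succ]
    push_cast
    ring

lemma summable_binProb_comp_sub (m : ℕ) (x : ℤ) : Summable fun k => binProb m (k - x) := by
  refine summable_of_ne_finset_zero (s := Icc x (m + x)) fun k hk => ?_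
  rw [mem_Icc, not_and_or, not_le, not_le] at hk
  rcases hk with hk | hk
  · exact binProb_eq_zero_of_neg (by omega)
  · exact binProb_eq_zero_of_lt (by omega)

lemma summable_binProb (m : ℕ) : Summable (binProb m) := by
  simpa using summable_binProb_comp_sub m 0

lemma Nat.choose_succ_le_of_half_le {n r : ℕ} (h : n / 2 ≤ r) :
    n.choose (r + 1) ≤ n.choose r := by
  refine Nat.le_of_mul_le_mul_right ?_ r.succ_pos
  calc n.choose (r + 1) * (r + 1) = n.choose r * (n - r) := Nat.choose_succ_right_eq n r
    _ ≤ n.choose r * (r + 1) := Nat.mul_le_mul_left _ (by omega)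

lemma binProb_le_succ_of_lt_half {m j : ℕ} (h : j < m / 2) :
    binProb m j ≤ binProb m (j + 1 : ℕ) := by
  simp only [binProb_natCast]
  gcongr
  exact Nat.choose_le_succ_of_lt_half_left h

lemma binProb_succ_le_of_half_le {m j : ℕ} (h : m / 2 ≤ j) :
    binProb m (j + 1 : ℕ) ≤ binProb m j := by
  simp only [binProb_natCast]
  gcongr
  exact Nat.choose_succ_le_of_half_le h

noncomputable def binMaxProb (m : ℕ) : ℝ := (m.choose (m / 2) : ℝ) / 2 ^ m

lemma binProb_half (m : ℕ) : binProb m (m / 2 : ℕ) = binMaxProb m :=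
  binProb_natCast m (m / 2)

lemma binMaxProb_nonneg (m : ℕ) : 0 ≤ binMaxProb m :=
  binProb_half m ▸ binProb_nonneg m _

lemma binProb_le_binMaxProb (m : ℕ) (k : ℤ) : binProb m k ≤ binMaxProb m := by
  rcases lt_or_ge k 0 with hk | hk
  · exact binProb_eq_zero_of_neg hk ▸ binMaxProb_nonneg m
  obtain ⟨j, rfl⟩ := Int.eq_ofNat_of_zero_le hk
  rw [binProb_natCast, binMaxProb]
  gcongr
  exact Nat.choose_le_middle j m

lemma binMaxProb_succ_le (m : ℕ) : binMaxProb (m + 1) ≤ binMaxProb m := by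
  rw [← binProb_half, binProb_succ]
  linarith [binProb_le_binMaxProb m ((m + 1) / 2 : ℕ),
    binProb_le_binMaxProb m (((m + 1) / 2 : ℕ) - 1)]

lemma binMaxProb_antitone : Antitone binMaxProb :=
  antitone_nat_of_succ_le binMaxProb_succ_le

lemma sum_range_abs_sub_of_unimodal {q : ℕ → ℝ} {p N : ℕ} (hpN : p ≤ N)
    (hup : ∀ j < p, q j ≤ q (j + 1)) (hdown : ∀ j, p ≤ j → q (j + 1) ≤ q j) :
    ∑ j ∈ range N, |q j - q (j + 1)| = 2 * q p - q 0 - q N := by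
  rw [← sum_range_add_sum_Ico _ hpN]
  have hrise : ∑ j ∈ range p, |q j - q (j + 1)| = q p - q 0 := by
    rw [← sum_range_sub]
    exact sum_congr rfl fun j hj => by
      rw [abs_sub_comm, abs_of_nonneg (sub_nonneg.2 (hup j (mem_range.1 hj)))]
  have hfall : ∑ j ∈ Ico p N, |q j - q (j + 1)| = q p - q N := by
    rw [← neg_sub, ← sum_Ico_sub _ hpN, ← sum_neg_distrib]
    exact sum_congr rfl fun j hj => by
      rw [abs_of_nonneg (sub_nonneg.2 (hdown j (mem_Ico.1 hj).1)), neg_sub]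
  rw [hrise, hfall]
  ring

lemma tsum_abs_binProb_sub_one_sub (m : ℕ) :
    ∑' k : ℤ, |binProb m (k - 1) - binProb m k| = 2 * binMaxProb m := by
  -- the summand vanishes for `k < 0`, so the sum moves to `ℕ` via `q j = p(j - 1)`
  obtain ⟨q, hq⟩ : ∃ q : ℕ → ℝ, ∀ j : ℕ, q j = binProb m ((j : ℤ) - 1) :=
    ⟨_, fun _ => rfl⟩
  have hq_succ (j : ℕ) : q (j + 1) = binProb m j := by rw [hq]; push_cast; ring_nf
  have hq_zero : q 0 = 0 := by rw [hq]; exact binProb_eq_zero_of_neg (by omega)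
  have hsupp : (Function.support fun k : ℤ => |binProb m (k - 1) - binProb m k|) ⊆
      Set.range ((↑) : ℕ → ℤ) := by
    intro k hk
    by_contra hneg
    have hk0 : k < 0 := by
      by_contra h
      exact hneg ⟨k.toNat, by omega⟩
    simp [binProb_eq_zero_of_neg hk0, binProb_eq_zero_of_neg (show k - 1 < 0 by omega)] at hk
  rw [← Nat.cast_injective.tsum_eq hsupp]
  simp only [← hq, ← hq_succ]
  rw [tsum_eq_sum (s := range (m + 2)),
    sum_range_abs_sub_of_unimodal (p := m / 2 + 1) (by omega)]
  · rw [hq_succ, hq_succ, binProb_half, hq_zero, binProb_eq_zero_of_lt (by omega)]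
    ring
  · intro j hj
    cases j with
    | zero => rw [hq_zero, hq_succ]; exact binProb_nonneg m _
    | succ i => rw [hq_succ, hq_succ]; exact binProb_le_succ_of_lt_half (by omega)
  · intro j hj
    obtain ⟨i, rfl⟩ : ∃ i, j = i + 1 := ⟨j - 1, by omega⟩
    rw [hq_succ, hq_succ]
    exact binProb_succ_le_of_half_le (by omega)
  · intro j hj
    rw [mem_range] at hj
    obtain ⟨i, rfl⟩ : ∃ i, j = i + 1 := ⟨j - 1, by omega⟩
    rw [hq_succ, hq_succ, binProb_eq_zero_of_lt (by omega), binProb_eq_zero_of_lt (by omega)]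
    simp

lemma tsum_abs_binProb_succ_sub (m : ℕ) :
    ∑' k : ℤ, |binProb (m + 1) k - binProb m k| = binMaxProb m := by
  have hhalf (k : ℤ) : |binProb (m + 1) k - binProb m k| =
      |binProb m (k - 1) - binProb m k| / 2 := by
    rw [binProb_succ, ← abs_two, ← abs_div, abs_two]
    ring_nf
  simp only [hhalf, tsum_div_const, tsum_abs_binProb_sub_one_sub]
  ring

lemma tsum_abs_sub_le_add {α : Type*} {f g h : α → ℝ} (hf : Summable f) (hg : Summable g)
    (hh : Summable h) :
    ∑' a, |f a - h a| ≤ ∑' a, |f a - g a| + ∑' a, |g a - h a| := by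
  rw [← (hf.sub hg).abs.tsum_add (hg.sub hh).abs]
  exact (hf.sub hh).abs.tsum_le_tsum (fun a => abs_sub_le _ _ _)
    ((hf.sub hg).abs.add (hg.sub hh).abs)

lemma tsum_abs_sub_le_sum_range {α : Type*} {F : ℕ → α → ℝ} (hF : ∀ i, Summable (F i))
    (n : ℕ) : ∑' a, |F n a - F 0 a| ≤ ∑ i ∈ range n, ∑' a, |F (i + 1) a - F i a| := by
  induction n with
  | zero => simp
  | succ n ih =>
    rw [sum_range_succ, add_comm (∑ i ∈ range n, _)]
    exact (tsum_abs_sub_le_add (hF _) (hF n) (hF 0)).trans (add_le_add_right ih _)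

lemma tsum_abs_binProb_comp_sub_sub_le (m c : ℕ) :
    ∑' k : ℤ, |binProb m (k - c) - binProb m k| ≤ c * (2 * binMaxProb m) := by
  have hstep (i : ℕ) :
      ∑' k : ℤ, |binProb m (k - (i + 1)) - binProb m (k - i)| = 2 * binMaxProb m := by
    rw [← tsum_abs_binProb_sub_one_sub m,
      ← (Equiv.subRight (i : ℤ)).tsum_eq fun k => |binProb m (k - 1) - binProb m k|]
    exact tsum_congr fun k => by rw [Equiv.subRight_apply, sub_sub, add_comm]
  simpa [hstep] using tsum_abs_sub_le_sum_range
    (F := fun i k => binProb m (k - (i : ℕ))) (fun i => summable_binProb_comp_sub m i) c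

lemma tsum_abs_binProb_add_sub_le (m j : ℕ) :
    ∑' k : ℤ, |binProb (m + j) k - binProb m k| ≤ j * binMaxProb m := by
  refine (tsum_abs_sub_le_sum_range (F := fun i => binProb (m + i))
    (fun i => summable_binProb _) j).trans ?_
  simpa [← add_assoc, tsum_abs_binProb_succ_sub] using
    sum_le_sum fun i (_ : i ∈ range j) => binMaxProb_antitone (Nat.le_add_right m i)

lemma centralBinom_div_four_pow_sq_mul_le (k : ℕ) :
    ((k.centralBinom : ℝ) / 4 ^ k) ^ 2 * (k + 1) ≤ 1 := by
  induction k with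
  | zero => simp
  | succ k ih =>
    set r := (k.centralBinom : ℝ) / 4 ^ k
    set r' := ((k + 1).centralBinom : ℝ) / 4 ^ (k + 1)
    have hrec : r' * (2 * k + 2) = r * (2 * k + 1) := by
      have h := congrArg (Nat.cast : ℕ → ℝ) (Nat.succ_mul_centralBinom_succ k)
      push_cast at h
      simp only [r, r', pow_succ]
      field_simp
      linarith
    push_cast
    refine le_of_mul_le_mul_right ?_ (by positivity : (0 : ℝ) < (2 * k + 2) ^ 2 * (k + 1))
    calc r' ^ 2 * ((k : ℝ) + 1 + 1) * ((2 * k + 2) ^ 2 * (k + 1))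
        = (2 * (k : ℝ) + 1) ^ 2 * (k + 2) * (r ^ 2 * (k + 1)) := by
          linear_combination
            ((k : ℝ) + 2) * (k + 1) * (r' * (2 * k + 2) + r * (2 * k + 1)) * hrec
      _ ≤ (2 * (k : ℝ) + 1) ^ 2 * (k + 2) := mul_le_of_le_one_right (by positivity) ih
      _ ≤ 1 * ((2 * (k : ℝ) + 2) ^ 2 * (k + 1)) := by nlinarith

lemma binMaxProb_sq_mul_le (m : ℕ) : binMaxProb m ^ 2 * (m + 1) ≤ 2 := by
  have hle : binMaxProb m ≤ ((m / 2).centralBinom : ℝ) / 4 ^ (m / 2) := by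
    refine (binMaxProb_antitone (Nat.mul_div_le m 2)).trans_eq ?_
    rw [binMaxProb, Nat.centralBinom, Nat.mul_div_cancel_left _ two_pos, pow_mul]
    norm_num
  have hm : (m : ℝ) + 1 ≤ 2 * ((m / 2 : ℕ) + 1) := by
    have : m + 1 ≤ 2 * (m / 2 + 1) := by omega
    exact_mod_cast this
  have h0 := binMaxProb_nonneg m
  calc binMaxProb m ^ 2 * (m + 1)
      ≤ (((m / 2).centralBinom : ℝ) / 4 ^ (m / 2)) ^ 2 * (2 * ((m / 2 : ℕ) + 1)) := by
        gcongr
    _ ≤ 2 := by linarith [centralBinom_div_four_pow_sq_mul_le (m / 2)]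

lemma binMaxProb_le_two_div_sqrt {m n : ℕ} (hn : 0 < n) (hmn : n ≤ 2 * m) :
    binMaxProb m ≤ 2 / Real.sqrt n := by
  have hn' : (0 : ℝ) < n := by exact_mod_cast hn
  have hmn' : (n : ℝ) ≤ 2 * m := by exact_mod_cast hmn
  rw [show (2 : ℝ) / Real.sqrt n = Real.sqrt (4 / n) by
    rw [Real.sqrt_div' _ hn'.le, show (4 : ℝ) = 2 ^ 2 by norm_num, Real.sqrt_sq two_pos.le]]
  refine Real.le_sqrt_of_sq_le ?_
  rw [le_div_iff₀ hn']
  nlinarith [binMaxProb_sq_mul_le m, sq_nonneg (binMaxProb m)]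

lemma abs_massOf_sub_le {f g : ℤ → ℝ} (hf : Summable f) (hg : Summable g) (A : Set ℤ) :
    |massOf f A - massOf g A| ≤ ∑' k, |f k - g k| := by
  have habs : Summable fun k => |f k - g k| := (hf.sub hg).abs
  have hsub : massOf f A - massOf g A = ∑' k : A, (f k - g k) :=
    ((hf.subtype A).tsum_sub (hg.subtype A)).symm
  rw [hsub]
  calc |∑' k : A, (f k - g k)| ≤ ∑' k : A, |f k - g k| := by
        simpa only [Real.norm_eq_abs] using
          norm_tsum_le_tsum_norm (f := fun k : A => f k - g k) (habs.subtype A)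
    _ ≤ ∑' k, |f k - g k| :=
        tsum_comp_le_tsum_of_inj habs (fun _ => abs_nonneg _) Subtype.val_injective

lemma dTV_le_tsum_abs_sub {f g : ℤ → ℝ} (hf : Summable f) (hg : Summable g) :
    dTV f g ≤ ∑' k, |f k - g k| :=
  ciSup_le (abs_massOf_sub_le hf hg)

lemma dTV_nonneg (f g : ℤ → ℝ) : 0 ≤ dTV f g :=
  Real.iSup_nonneg fun _ => abs_nonneg _

lemma dTV_binProb_comp_sub_le {m n : ℕ} (c : ℕ) (hmn : m ≤ n) :
    dTV (fun k => binProb m (k - c)) (binProb n) ≤ (2 * c + (n - m : ℕ)) * binMaxProb m := by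
  have hgrow := tsum_abs_binProb_add_sub_le m (n - m)
  rw [Nat.add_sub_cancel' hmn] at hgrow
  calc dTV (fun k => binProb m (k - c)) (binProb n)
      ≤ ∑' k : ℤ, |binProb m (k - c) - binProb n k| :=
        dTV_le_tsum_abs_sub (summable_binProb_comp_sub m c) (summable_binProb n)
    _ ≤ ∑' k : ℤ, |binProb m (k - c) - binProb m k| +
          ∑' k : ℤ, |binProb m k - binProb n k| :=
        tsum_abs_sub_le_add (summable_binProb_comp_sub m c) (summable_binProb m)
          (summable_binProb n)
    _ ≤ c * (2 * binMaxProb m) + (n - m : ℕ) * binMaxProb m := by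
        simp only [abs_sub_comm (binProb m _) (binProb n _)]
        exact add_le_add (tsum_abs_binProb_comp_sub_sub_le m c) hgrow
    _ = (2 * c + (n - m : ℕ)) * binMaxProb m := by ring

lemma eventually_two_mul_le_of_tendsto_div_sqrt {d : ℕ → ℕ}
    (hd : Tendsto (fun n => (d n : ℝ) / Real.sqrt n) atTop (nhds 0)) :
    ∀ᶠ n in atTop, 2 * d n ≤ n := by
  filter_upwards [hd.eventually_lt_const one_half_pos, eventually_ge_atTop 1] with n hdn hn
  have hn' : (1 : ℝ) ≤ n := by exact_mod_cast hn
  have hsqrt : Real.sqrt n ≤ n := Real.sqrt_le_left (by linarith) |>.2 (by nlinarith)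
  rw [div_lt_iff₀ (by positivity)] at hdn
  exact_mod_cast (show (2 * d n : ℝ) ≤ n by linarith)

/-- Total variation closeness of shifted binomials: if `d n = o(√n)`, `c n ≤ d n` and
`n − d n ≤ m n ≤ n`, then `d_TV(c n + Bin(m n, 1/2), Bin(n, 1/2)) → 0`. -/
theorem tv_shifted_binomials (d c m : ℕ → ℕ)
    (hd : Tendsto (fun n => (d n : ℝ) / Real.sqrt n) atTop (nhds 0))
    (hc : ∀ n, c n ≤ d n)
    (hm1 : ∀ n, n - d n ≤ m n) (hm2 : ∀ n, m n ≤ n) :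
    Tendsto (fun n => dTV (fun k => binProb (m n) (k - (c n : ℤ))) (binProb n))
      atTop (nhds 0) := by
  have hbound : ∀ᶠ n in atTop,
      dTV (fun k => binProb (m n) (k - (c n : ℤ))) (binProb n) ≤
        6 * ((d n : ℝ) / Real.sqrt n) := by
    filter_upwards [eventually_two_mul_le_of_tendsto_div_sqrt hd, eventually_gt_atTop 0]
      with n hdn hn
    have hweight : 2 * (c n : ℝ) + (n - m n : ℕ) ≤ 3 * d n := by
      have := hc n; have := hm1 n
      exact_mod_cast (show 2 * c n + (n - m n) ≤ 3 * d n by omega)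
    have hpeak := binMaxProb_le_two_div_sqrt hn (show n ≤ 2 * m n by have := hm1 n; omega)
    calc dTV (fun k => binProb (m n) (k - (c n : ℤ))) (binProb n)
        ≤ (2 * c n + (n - m n : ℕ)) * binMaxProb (m n) := dTV_binProb_comp_sub_le (c n) (hm2 n)
      _ ≤ 3 * d n * (2 / Real.sqrt n) :=
          mul_le_mul hweight hpeak (binMaxProb_nonneg _) (by positivity)
      _ = 6 * ((d n : ℝ) / Real.sqrt n) := by ring
  exact squeeze_zero' (Eventually.of_forall fun n => dTV_nonneg _ _) hbound
    (by simpa using hd.const_mul 6)
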